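/- Consider the two-point space X = {0,1} with transition rates k(0,1) = a and k(1,0) = b, where a, b > 0, and set λ = min{a/b, b/a}. Then the function F : [0,∞) → [0,∞) defined by F(r) = (ab/2)·ν_{1+λ,λ}( −r/max{a,b} ) is a CD-function, and the Markov generator L satisfies CD_Υ(0,F). -/

import Mathlib

/-! With `k = k(x,1-x)`, `k' = k(1-x,x)` and `h_λ(t) = ν_{1+λ,λ}(-t)`, a direct computation on the
two-point space gives `Ψ_{2,Υ}(f)(x) = (k k'/2) h_{k/k'}(t)` and `-L f(x) = k t`, where
`t = f(x) - f(1-x)`. The profile `h_λ` is increasing in `λ`, nonnegative for `λ ≥ 0`, and strictly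
convex with `h_λ(0) = 0` for `|λ| ≤ 1`. Convexity makes `h_λ(t)/t` strictly increasing and gives
`h_λ(c t) ≤ c h_λ(t) ≤ h_λ(t)` for `c ∈ [0,1]`. If `k ≤ k'` then `λ = k/k'` and the argument of
`F` is `λ t`; if `k' ≤ k` then `λ = k'/k ≤ k/k'` and the argument is `t`. Either way
`F(-L f(x)) ≤ Ψ_{2,Υ}(f)(x)`. Finally `h_λ(t) ≥ e^t - 2`, so `1/F` decays exponentially. -/

open Real Filter MeasureTheory Set

/-- `Υ(r) = e^r - r - 1`. -/
noncomputable def Ups (r : ℝ) : ℝ := Real.exp r - r - 1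

/-- `ν_{c,d}(r) = c Υ'(r) r + Υ(-r) - d Υ(r)`. -/
noncomputable def nuFn (c d r : ℝ) : ℝ :=
  c * (Real.exp r - 1) * r + Ups (-r) - d * Ups r

/-- A CD-function: continuous and nonnegative on `[0,∞)` with `F(0) = 0`, `F(r)/r`
strictly increasing on `(0,∞)` and `1/F` integrable at `∞`. -/
def IsCDFunction (F : ℝ → ℝ) : Prop :=
  ContinuousOn F (Ici 0) ∧ F 0 = 0 ∧ (∀ r : ℝ, 0 ≤ r → 0 ≤ F r) ∧
  StrictMonoOn (fun r => F r / r) (Ioi 0) ∧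
  ∃ c : ℝ, 0 < c ∧ IntegrableOn (fun r => 1 / F r) (Ioi c)

/-- The trivial extension `F₀` of `F : [0,∞) → [0,∞)` by `0` on `(-∞,0)`. -/
noncomputable def trivExt (F : ℝ → ℝ) : ℝ → ℝ := fun r => if 0 ≤ r then F r else 0

/-- The two-point space `X = {0,1}` is modelled by `Bool` (`false ↔ 0`, `true ↔ 1`);
the jump rate out of the state `x`: `k(0,1) = a`, `k(1,0) = b`. -/
def rate2 (a b : ℝ) (x : Bool) : ℝ := cond x b a

/-- The generator on the two-point space: `L f(x) = k(x,1-x)(f(1-x) - f(x))`. -/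
noncomputable def gen2 (a b : ℝ) (f : Bool → ℝ) (x : Bool) : ℝ :=
  rate2 a b x * (f (!x) - f x)

/-- `Ψ_Υ(f)(x) = k(x,1-x) Υ(f(1-x)-f(x))` on the two-point space. -/
noncomputable def psiUps2 (a b : ℝ) (f : Bool → ℝ) (x : Bool) : ℝ :=
  rate2 a b x * Ups (f (!x) - f x)

/-- `B_{Υ'}(f,g)(x) = k(x,1-x) Υ'(f(1-x)-f(x)) (g(1-x)-g(x))` on the two-point space. -/
noncomputable def bUps2 (a b : ℝ) (f g : Bool → ℝ) (x : Bool) : ℝ :=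
  rate2 a b x * (Real.exp (f (!x) - f x) - 1) * (g (!x) - g x)

/-- `Ψ_{2,Υ}(f) = (1/2)(L Ψ_Υ(f) - B_{Υ'}(f,Lf))` on the two-point space. -/
noncomputable def psi2Ups2 (a b : ℝ) (f : Bool → ℝ) (x : Bool) : ℝ :=
  (1/2) * (gen2 a b (psiUps2 a b f) x - bUps2 a b f (gen2 a b f) x)

noncomputable def nuProfile (l t : ℝ) : ℝ := nuFn (1 + l) l (-t)

lemma nuProfile_eq (l t : ℝ) :
    nuProfile l t = exp t - 1 - t * exp (-t) + l * (1 - (1 + t) * exp (-t)) := by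
  simp only [nuProfile, nuFn, Ups, neg_neg]; ring

lemma one_add_mul_exp_neg_le_one (t : ℝ) : (1 + t) * exp (-t) ≤ 1 := by
  calc (1 + t) * exp (-t) ≤ exp t * exp (-t) :=
        mul_le_mul_of_nonneg_right (by linarith [add_one_le_exp t]) (exp_pos _).le
    _ = 1 := by rw [← exp_add, add_neg_cancel, exp_zero]

lemma nuProfile_zero (l : ℝ) : nuProfile l 0 = 0 := by
  simp [nuProfile_eq]

lemma continuous_nuProfile (l : ℝ) : Continuous (nuProfile l) := by
  simp only [funext (nuProfile_eq l)]; fun_prop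

lemma nuProfile_mono_left {l l' : ℝ} (h : l ≤ l') (t : ℝ) : nuProfile l t ≤ nuProfile l' t := by
  simp only [nuProfile_eq]
  nlinarith [one_add_mul_exp_neg_le_one t]

lemma exp_sub_two_le_nuProfile {l : ℝ} (hl : 0 ≤ l) (t : ℝ) : exp t - 2 ≤ nuProfile l t := by
  have hte : t * exp (-t) ≤ 1 := by nlinarith [one_add_mul_exp_neg_le_one t, exp_pos (-t)]
  rw [nuProfile_eq]
  nlinarith [one_add_mul_exp_neg_le_one t]

lemma nuProfile_nonneg {l : ℝ} (hl : 0 ≤ l) (t : ℝ) : 0 ≤ nuProfile l t := by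
  have hprod : 0 ≤ t * (1 - exp (-t)) := by
    rcases le_total 0 t with ht | ht
    · exact mul_nonneg ht (by simpa using exp_le_one_iff.2 (neg_nonpos.2 ht))
    · exact mul_nonneg_of_nonpos_of_nonpos ht (by simpa using one_le_exp (neg_nonneg.2 ht))
  calc 0 ≤ nuProfile 0 t := by rw [nuProfile_eq]; nlinarith [add_one_le_exp t]
    _ ≤ nuProfile l t := nuProfile_mono_left hl t

lemma hasDerivAt_nuProfile (l t : ℝ) :
    HasDerivAt (nuProfile l) (exp t - exp (-t) + (1 + l) * t * exp (-t)) t := by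
  have he : HasDerivAt (fun s => exp (-s)) (-exp (-t)) t := by
    simpa using (hasDerivAt_neg t).exp
  rw [funext (nuProfile_eq l)]
  exact ((((hasDerivAt_exp t).sub_const 1).sub ((hasDerivAt_id' t).mul he)).add
    (HasDerivAt.const_mul l ((((hasDerivAt_id' t).const_add 1).mul he).const_sub 1))).congr_deriv
    (by ring)

lemma hasDerivAt_deriv_nuProfile (l t : ℝ) :
    HasDerivAt (fun s => exp s - exp (-s) + (1 + l) * s * exp (-s))
      (exp t + exp (-t) + (1 + l) * (1 - t) * exp (-t)) t := by
  have he : HasDerivAt (fun s => exp (-s)) (-exp (-t)) t := by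
    simpa using (hasDerivAt_neg t).exp
  exact (((hasDerivAt_exp t).sub he).add
    (((hasDerivAt_id' t).const_mul (1 + l)).mul he)).congr_deriv (by ring)

lemma strictConvexOn_nuProfile {l : ℝ} (hl₀ : -1 ≤ l) (hl₁ : l ≤ 1) :
    StrictConvexOn ℝ univ (nuProfile l) := by
  refine strictConvexOn_univ_of_deriv2_pos (continuous_nuProfile l) fun t => ?_
  have hderiv : deriv (nuProfile l) = fun s => exp s - exp (-s) + (1 + l) * s * exp (-s) :=
    funext fun s => (hasDerivAt_nuProfile l s).deriv
  rw [Function.iterate_succ_apply, Function.iterate_one, hderiv,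
    (hasDerivAt_deriv_nuProfile l t).deriv]
  have hE : exp t * exp (-t) = 1 := by rw [← exp_add, add_neg_cancel, exp_zero]
  have hpos : 0 < exp t * exp t + 1 + (1 + l) * (1 - t) := by
    rcases le_total 0 t with ht | ht
    · have : 1 + 2 * t ≤ exp t * exp t := by
        rw [← exp_add, ← two_mul]; linarith [add_one_le_exp (2 * t)]
      nlinarith [mul_nonneg (sub_nonneg.2 hl₁) ht]
    · nlinarith [mul_pos (exp_pos t) (exp_pos t), mul_nonneg (neg_le_iff_add_nonneg.1 hl₀)
        (sub_nonneg.2 (ht.trans zero_le_one))]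
  refine pos_of_mul_pos_right (a := exp t) ?_ (exp_pos t).le
  linear_combination hpos - (1 + (1 + l) * (1 - t)) * hE

lemma StrictConvexOn.strictMonoOn_div_self {s : Set ℝ} {f : ℝ → ℝ} (hf : StrictConvexOn ℝ s f)
    (hs : (0 : ℝ) ∈ s) (h0 : f 0 = 0) : StrictMonoOn (fun x => f x / x) (s ∩ Ioi 0) := by
  intro x hx y hy hxy
  simpa [h0] using hf.secant_strict_mono hs hx.1 hy.1 hx.2.ne' hy.2.ne' hxy

lemma ConvexOn.map_mul_le {f : ℝ → ℝ} (hf : ConvexOn ℝ univ f) (h0 : f 0 = 0) {c t : ℝ}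
    (hc₀ : 0 ≤ c) (hc₁ : c ≤ 1) (ht : 0 ≤ f t) : f (c * t) ≤ f t := by
  have := hf.2 (mem_univ 0) (mem_univ t) (sub_nonneg.2 hc₁) hc₀ (sub_add_cancel 1 c)
  simp only [smul_eq_mul, mul_zero, zero_add, h0] at this
  nlinarith

lemma isCDFunction_nuProfile {l : ℝ} (hl₀ : 0 ≤ l) (hl₁ : l ≤ 1) : IsCDFunction (nuProfile l) := by
  refine ⟨(continuous_nuProfile l).continuousOn, nuProfile_zero l,
    fun r _ => nuProfile_nonneg hl₀ r, ?_, 3, by norm_num, ?_⟩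
  · simpa using (strictConvexOn_nuProfile (by linarith) hl₁).strictMonoOn_div_self (mem_univ 0)
      (nuProfile_zero l)
  refine ((integrableOn_exp_neg_Ioi 3).const_mul 2).mono'
    (measurable_const.div (continuous_nuProfile l).measurable).aestronglyMeasurable ?_
  filter_upwards [self_mem_ae_restrict measurableSet_Ioi] with r hr
  have hlow : exp r / 2 ≤ nuProfile l r := by
    linarith [exp_sub_two_le_nuProfile hl₀ r, add_one_le_exp r, mem_Ioi.1 hr]
  rw [norm_of_nonneg (one_div_nonneg.2 (nuProfile_nonneg hl₀ r)), exp_neg]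
  calc 1 / nuProfile l r ≤ 1 / (exp r / 2) := one_div_le_one_div_of_le (by positivity) hlow
    _ = 2 * (exp r)⁻¹ := by field_simp

lemma IsCDFunction.const_mul_comp_div {F : ℝ → ℝ} (hF : IsCDFunction F) {C M : ℝ} (hC : 0 < C)
    (hM : 0 < M) : IsCDFunction (fun r => C * F (r / M)) := by
  obtain ⟨hcont, h0, hnonneg, hmono, c, hc, hint⟩ := hF
  refine ⟨continuousOn_const.mul (hcont.comp (continuousOn_id.div_const M)
      fun r hr => div_nonneg hr hM.le), by simp [h0],
    fun r hr => mul_nonneg hC.le (hnonneg _ (div_nonneg hr hM.le)), ?_, c * M, by positivity, ?_⟩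
  · intro x hx y hy hxy
    have hxy' := hmono (div_pos hx hM) (div_pos hy hM) (div_lt_div_of_pos_right hxy hM)
    have hscale : ∀ z : ℝ, 0 < z → C * F (z / M) / z = C / M * (F (z / M) / (z / M)) := by
      intro z hz; field_simp
    simp only [hscale x hx, hscale y hy]
    exact mul_lt_mul_of_pos_left hxy' (div_pos hC hM)
  · have hcomp := (integrableOn_Ioi_comp_mul_right_iff (fun s => 1 / F s) (c * M)
      (inv_pos.2 hM)).2 (by rwa [mul_inv_cancel_right₀ hM.ne'])
    refine IntegrableOn.congr_fun (hcomp.const_mul C⁻¹) (fun r _ => ?_) measurableSet_Ioi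
    simp only [div_eq_mul_inv, one_mul, mul_inv]

lemma rate2_pos {a b : ℝ} (ha : 0 < a) (hb : 0 < b) (x : Bool) : 0 < rate2 a b x := by
  cases x <;> assumption

lemma psi2Ups2_eq {a b : ℝ} (ha : a ≠ 0) (hb : b ≠ 0) (f : Bool → ℝ) (x : Bool) :
    psi2Ups2 a b f x = rate2 a b x * rate2 a b (!x) / 2 *
      nuProfile (rate2 a b x / rate2 a b (!x)) (f x - f (!x)) := by
  cases x <;> simp only [psi2Ups2, gen2, psiUps2, bUps2, rate2, nuProfile_eq, Ups,
    Bool.not_false, Bool.not_true, cond_true, cond_false, neg_sub] <;> field_simp <;> ring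

lemma nuProfile_le_of_rates {k k' : ℝ} (hk : 0 < k) (hk' : 0 < k') (t : ℝ) :
    nuProfile (min (k / k') (k' / k)) (k * t / max k k') ≤ nuProfile (k / k') t := by
  rcases le_total k k' with h | h
  · have hle : k / k' ≤ 1 := (div_le_one hk').2 h
    rw [min_eq_left (hle.trans ((one_le_div hk).2 h)), max_eq_right h, mul_div_right_comm]
    exact (strictConvexOn_nuProfile (by linarith [div_pos hk hk']) hle).convexOn.map_mul_le (nuProfile_zero _)
      (by positivity) hle (nuProfile_nonneg (by positivity) t)
  · have hle : k' / k ≤ 1 := (div_le_one hk).2 h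
    rw [min_eq_right (hle.trans ((one_le_div hk').2 h)), max_eq_left h,
      mul_div_cancel_left₀ _ hk.ne']
    exact nuProfile_mono_left (hle.trans ((one_le_div hk').2 h)) t

lemma nuProfile_le_psi2Ups2 {a b : ℝ} (ha : 0 < a) (hb : 0 < b) (f : Bool → ℝ) (x : Bool) :
    a * b / 2 * nuProfile (min (a / b) (b / a)) (-gen2 a b f x / max a b) ≤ psi2Ups2 a b f x := by
  have hk := rate2_pos ha hb x
  have hk' := rate2_pos ha hb (!x)
  obtain ⟨hab, hmin, hmax⟩ : a * b = rate2 a b x * rate2 a b (!x) ∧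
      min (a / b) (b / a) = min (rate2 a b x / rate2 a b (!x)) (rate2 a b (!x) / rate2 a b x) ∧
      max a b = max (rate2 a b x) (rate2 a b (!x)) := by
    cases x <;> simp [rate2, mul_comm, min_comm, max_comm]
  have hgen : -gen2 a b f x = rate2 a b x * (f x - f (!x)) := by simp only [gen2]; ring
  rw [psi2Ups2_eq ha.ne' hb.ne', hab, hmin, hmax, hgen]
  exact mul_le_mul_of_nonneg_left (nuProfile_le_of_rates hk hk' _) (by positivity)

/-- Example 2.4: on the two-point space with rates `a, b > 0` and
`λ = min{a/b, b/a}`, the function `F(r) = (ab/2) ν_{1+λ,λ}(-r/max{a,b})` is a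
CD-function and `L` satisfies `CD_Υ(0,F)`. -/
theorem stmt_11 (a b : ℝ) (ha : 0 < a) (hb : 0 < b) :
    IsCDFunction (fun r =>
      a * b / 2 * nuFn (1 + min (a/b) (b/a)) (min (a/b) (b/a)) (-(r / max a b)))
    ∧ ∀ (f : Bool → ℝ) (x : Bool),
        trivExt (fun r =>
            a * b / 2 * nuFn (1 + min (a/b) (b/a)) (min (a/b) (b/a)) (-(r / max a b)))
          (-gen2 a b f x) ≤ psi2Ups2 a b f x := by
  have hl₀ : 0 ≤ min (a / b) (b / a) := le_min (by positivity) (by positivity)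
  have hl₁ : min (a / b) (b / a) ≤ 1 := by
    rcases le_total a b with h | h
    · exact min_le_of_left_le ((div_le_one hb).2 h)
    · exact min_le_of_right_le ((div_le_one ha).2 h)
  refine ⟨(isCDFunction_nuProfile hl₀ hl₁).const_mul_comp_div (by positivity)
    (lt_max_of_lt_left ha), fun f x => ?_⟩
  unfold trivExt
  split_ifs
  · exact nuProfile_le_psi2Ups2 ha hb f x
  · rw [psi2Ups2_eq ha.ne' hb.ne']
    have := rate2_pos ha hb x
    have := rate2_pos ha hb (!x)
    exact mul_nonneg (by positivity) (nuProfile_nonneg (by positivity) _)
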